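/- arXiv:2012.13833 — 2 statements merged into one kernel-verified Lean document; each statement's English description precedes it below -/
import Mathlib

section
/- Let ε > 0, let a : ℝ^d × ℝ^d → ℂ be a Schwartz symbol, and let φ : ℝ^d → ℂ be Schwartz. Define the Weyl quantization (a^W φ)(x) = (2π)^{−d} ∫_{ℝ^d} ( ∫_{ℝ^d} a((x+y)/2, ε k) φ(y) e^{i(x−y)·k} dy ) dk (iterated integral, inner in y, outer in k). Then the quantum expectation equals the phase-space pairing with the Wigner transform: ∫_{ℝ^d} conj(φ(x)) (a^W φ)(x) dx = ∫_{ℝ^d×ℝ^d} a(x,k) W^ε[φ](x,k) dx dk. -/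
/-!
Both sides are the same absolutely convergent integral over `ℝᵈ × ℝᵈ × ℝᵈ`, written in two
coordinate systems: the Weyl side in `(x, k, y)`, the Wigner side in `(X, κ, w)`, related by
`x = X + (ε/2) w`, `y = X - (ε/2) w`, `k = κ / ε`. This linear substitution preserves Lebesgue
measure and carries one integrand to the other, since `(x + y) / 2 = X`, `ε k = κ` and
`⟪x - y, k⟫ = ⟪κ, w⟫`. Absolute convergence (needed for both applications of Fubini) comes from
bounding the Weyl integrand by `|φ x| (1 + |ε k|)^(-d-1) |φ y|`, using only the decay of `a` in its
momentum variable.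
-/

open MeasureTheory Complex
open scoped SchwartzMap

noncomputable section

/-- The Wigner transform `W^ε[φ₁,φ₂]` of a pair of functions on `ℝ^d`. -/
def wigner (d : ℕ) (ε : ℝ) (φ₁ φ₂ : EuclideanSpace ℝ (Fin d) → ℂ)
    (x k : EuclideanSpace ℝ (Fin d)) : ℂ :=
  ((((2 * Real.pi) ^ d)⁻¹ : ℝ) : ℂ) * ∫ y : EuclideanSpace ℝ (Fin d),
    Complex.exp (Complex.I * ((inner ℝ k y : ℝ) : ℂ)) * φ₁ (x - (ε / 2) • y) *
      (starRingEnd ℂ) (φ₂ (x + (ε / 2) • y))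

/-- The Weyl quantization `a^W(x, εD_x)` of a phase-space symbol `a`, as an iterated
integral (inner in `y`, outer in `k`). -/
def weylQuant (d : ℕ) (ε : ℝ)
    (a : EuclideanSpace ℝ (Fin d) × EuclideanSpace ℝ (Fin d) → ℂ)
    (φ : EuclideanSpace ℝ (Fin d) → ℂ) (x : EuclideanSpace ℝ (Fin d)) : ℂ :=
  ((((2 * Real.pi) ^ d)⁻¹ : ℝ) : ℂ) * ∫ k : EuclideanSpace ℝ (Fin d),
    ∫ y : EuclideanSpace ℝ (Fin d),
      a ((2 : ℝ)⁻¹ • (x + y), ε • k) * φ y *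
        Complex.exp (Complex.I * ((inner ℝ (x - y) k : ℝ) : ℂ))

open Measure

theorem measurePreserving_fst_add_comp_snd {G F : Type*} [AddGroup G] [MeasurableSpace G]
    [MeasurableAdd₂ G] [MeasurableSpace F] (μ : Measure G) [μ.IsAddRightInvariant] [SFinite μ]
    (ν : Measure F) [SFinite ν] {f : F → G} (hf : Measurable f) :
    MeasurePreserving (fun p : G × F => (p.1 + f p.2, p.2)) (μ.prod ν) (μ.prod ν) :=
  measurePreserving_swap.comp <|
    ((MeasurePreserving.id ν).skew_product (g := fun b a => a + f b)
      (measurable_snd.add (hf.comp measurable_fst))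
      (ae_of_all _ fun b => map_add_right_eq_self μ (f b))).comp measurePreserving_swap

theorem measurePreserving_add_half_prod_sub_half {E : Type*} [AddCommGroup E] [Module ℝ E]
    [MeasurableSpace E] [MeasurableAdd₂ E] [MeasurableConstSMul ℝ E] (μ : Measure E)
    [μ.IsAddLeftInvariant] [SFinite μ] :
    MeasurePreserving (fun p : E × E => (p.1 + (2 : ℝ)⁻¹ • p.2, p.1 - (2 : ℝ)⁻¹ • p.2))
      (μ.prod μ) (μ.prod μ) := by
  have h := measurePreserving_swap.comp <| (measurePreserving_prod_add μ μ).comp <|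
    measurePreserving_fst_add_comp_snd μ μ (f := fun v : E => (-2⁻¹ : ℝ) • v) (by fun_prop)
  convert h using 1
  funext p
  simp only [Function.comp_apply, Prod.swap_prod_mk, Prod.mk.injEq]
  constructor <;> module

section Haar

variable {E : Type*} [NormedAddCommGroup E] [NormedSpace ℝ E] [MeasurableSpace E] [BorelSpace E]
  [FiniteDimensional ℝ E] (μ : Measure E) [μ.IsAddHaarMeasure]

theorem measurePreserving_inv_smul_prod_smul {c : ℝ} (hc : c ≠ 0) :
    MeasurePreserving (fun p : E × E => (c⁻¹ • p.1, c • p.2)) (μ.prod μ) (μ.prod μ) := by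
  refine ⟨by fun_prop, ?_⟩
  rw [← Prod.map_def, ← map_prod_map _ _ (by fun_prop) (by fun_prop),
    map_addHaar_smul μ (inv_ne_zero hc), map_addHaar_smul μ hc, prod_smul_left, prod_smul_right,
    smul_smul, ← ENNReal.ofReal_mul (abs_nonneg _), inv_pow, inv_inv, abs_inv,
    mul_inv_cancel₀ (abs_ne_zero.mpr (pow_ne_zero _ hc)), ENNReal.ofReal_one, one_smul]

def wignerToWeylCoords (ε : ℝ) (q : (E × E) × E) : E × (E × E) :=
  (q.1.1 + (ε / 2) • q.2, ε⁻¹ • q.1.2, q.1.1 - (ε / 2) • q.2)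

/-- Up to reordering the factors, this is `(κ, w) ↦ (κ / ε, ε w)`, whose Jacobians `ε⁻ᵈ` and `εᵈ`
cancel, followed by `(X, v) ↦ (X + v / 2, X - v / 2)`. -/
theorem measurePreserving_wignerToWeylCoords {ε : ℝ} (hε : ε ≠ 0) :
    MeasurePreserving (wignerToWeylCoords ε) ((μ.prod μ).prod μ) (μ.prod (μ.prod μ)) := by
  have assoc := measurePreserving_prodAssoc μ μ μ
  have swap₂ := (MeasurePreserving.id μ).prod (measurePreserving_swap (μ := μ) (ν := μ))
  have h := swap₂.comp <| assoc.comp <|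
    ((measurePreserving_add_half_prod_sub_half μ).prod (MeasurePreserving.id μ)).comp <|
    (assoc.symm MeasurableEquiv.prodAssoc).comp <| swap₂.comp <|
    ((MeasurePreserving.id μ).prod (measurePreserving_inv_smul_prod_smul μ hε)).comp assoc
  convert h using 1
  funext ⟨⟨X, κ⟩, w⟩
  simp only [wignerToWeylCoords, Function.comp_apply, Prod.map_apply, id_eq, Prod.swap_prod_mk,
    MeasurableEquiv.prodAssoc, MeasurableEquiv.coe_mk, MeasurableEquiv.symm_mk,
    Equiv.prodAssoc_apply, Equiv.prodAssoc_symm_apply, smul_smul, Prod.mk.injEq]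
  refine ⟨?_, trivial, ?_⟩ <;> module

end Haar

theorem SchwartzMap.exists_norm_le_mul_one_add_norm_rpow_neg {V F : Type*} [NormedAddCommGroup V]
    [NormedSpace ℝ V] [NormedAddCommGroup F] [NormedSpace ℝ F] (f : 𝓢(V, F)) (k : ℕ) :
    ∃ C, 0 ≤ C ∧ ∀ x, ‖f x‖ ≤ C * (1 + ‖x‖) ^ (-(k : ℝ)) := by
  refine ⟨2 ^ k * (Finset.Iic (k, 0)).sup (fun m => SchwartzMap.seminorm ℝ m.1 m.2) f,
    by positivity, fun x => ?_⟩
  have h := f.one_add_le_sup_seminorm_apply (𝕜 := ℝ) (m := (k, 0)) le_rfl le_rfl x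
  rw [norm_iteratedFDeriv_zero] at h
  rw [Real.rpow_neg (by positivity), Real.rpow_natCast, ← div_eq_mul_inv,
    le_div_iff₀ (by positivity), mul_comm]
  exact h

section PhaseSpace

variable {E : Type*} [NormedAddCommGroup E] [InnerProductSpace ℝ E]

def weylKernel (ε : ℝ) (a : E × E → ℂ) (φ : E → ℂ) (x : E) (p : E × E) : ℂ :=
  a ((2 : ℝ)⁻¹ • (x + p.2), ε • p.1) * φ p.2 * exp (I * ((inner ℝ (x - p.2) p.1 : ℝ) : ℂ))

def weylPairingIntegrand (ε : ℝ) (a : E × E → ℂ) (φ : E → ℂ) (z : E × (E × E)) : ℂ :=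
  starRingEnd ℂ (φ z.1) * weylKernel ε a φ z.1 z.2

def wignerPairingIntegrand (ε : ℝ) (a : E × E → ℂ) (φ : E → ℂ) (q : (E × E) × E) : ℂ :=
  a q.1 * (exp (I * ((inner ℝ q.1.2 q.2 : ℝ) : ℂ)) * φ (q.1.1 - (ε / 2) • q.2) *
    starRingEnd ℂ (φ (q.1.1 + (ε / 2) • q.2)))

theorem weylPairingIntegrand_wignerToWeylCoords {ε : ℝ} (hε : ε ≠ 0) (a : E × E → ℂ)
    (φ : E → ℂ) (q : (E × E) × E) :
    weylPairingIntegrand ε a φ (wignerToWeylCoords ε q) = wignerPairingIntegrand ε a φ q := by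
  obtain ⟨⟨X, κ⟩, w⟩ := q
  have hmid : (2 : ℝ)⁻¹ • (X + (ε / 2) • w + (X - (ε / 2) • w)) = X := by module
  have hdiff : X + (ε / 2) • w - (X - (ε / 2) • w) = ε • w := by module
  have hinner : inner ℝ (ε • w) (ε⁻¹ • κ) = inner ℝ κ w := by
    rw [real_inner_smul_left, real_inner_smul_right, ← mul_assoc, mul_inv_cancel₀ hε, one_mul,
      real_inner_comm]
  simp only [weylPairingIntegrand, weylKernel, wignerPairingIntegrand, wignerToWeylCoords, hmid,
    hdiff, hinner, smul_inv_smul₀ hε]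
  ring

theorem continuous_weylPairingIntegrand (ε : ℝ) (a : 𝓢(E × E, ℂ)) (φ : 𝓢(E, ℂ)) :
    Continuous (weylPairingIntegrand ε a φ) := by
  unfold weylPairingIntegrand weylKernel
  fun_prop

variable [FiniteDimensional ℝ E] [MeasurableSpace E] [BorelSpace E] (μ : Measure E)
  [μ.IsAddHaarMeasure]

theorem exists_integrable_bound_weylKernel {ε : ℝ} (hε : ε ≠ 0) (a : 𝓢(E × E, ℂ))
    (φ : 𝓢(E, ℂ)) :
    ∃ B : E × E → ℝ, Integrable B (μ.prod μ) ∧ ∀ x p, ‖weylKernel ε a φ x p‖ ≤ B p := by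
  set r : ℝ := ((Module.finrank ℝ E + 1 : ℕ) : ℝ)
  obtain ⟨C, hC₀, hC⟩ := a.exists_norm_le_mul_one_add_norm_rpow_neg (Module.finrank ℝ E + 1)
  refine ⟨fun p => C * (1 + ‖ε • p.1‖) ^ (-r) * ‖φ p.2‖, ?_, fun x p => ?_⟩
  · exact (((integrable_one_add_norm (by simp [r])).comp_smul hε).const_mul C).mul_prod
      φ.integrable.norm
  · rw [weylKernel, norm_mul, norm_mul, norm_exp_I_mul_ofReal, mul_one]
    refine mul_le_mul_of_nonneg_right ((hC _).trans (mul_le_mul_of_nonneg_left ?_ hC₀))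
      (norm_nonneg _)
    refine Real.rpow_le_rpow_of_nonpos (by positivity) ?_ (by simp only [neg_nonpos]; positivity)
    exact add_le_add_right (norm_snd_le ((2 : ℝ)⁻¹ • (x + p.2), ε • p.1)) 1

theorem integrable_weylKernel {ε : ℝ} (hε : ε ≠ 0) (a : 𝓢(E × E, ℂ)) (φ : 𝓢(E, ℂ)) (x : E) :
    Integrable (weylKernel ε a φ x) (μ.prod μ) := by
  obtain ⟨B, hB, hle⟩ := exists_integrable_bound_weylKernel μ hε a φ
  refine hB.mono' ?_ (ae_of_all _ (hle x))
  exact Continuous.aestronglyMeasurable (by unfold weylKernel; fun_prop)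

theorem integrable_weylPairingIntegrand {ε : ℝ} (hε : ε ≠ 0) (a : 𝓢(E × E, ℂ)) (φ : 𝓢(E, ℂ)) :
    Integrable (weylPairingIntegrand ε a φ) (μ.prod (μ.prod μ)) := by
  obtain ⟨B, hB, hle⟩ := exists_integrable_bound_weylKernel μ hε a φ
  refine (φ.integrable.norm.mul_prod hB).mono'
    (continuous_weylPairingIntegrand ε a φ).aestronglyMeasurable (ae_of_all _ fun z => ?_)
  rw [weylPairingIntegrand, norm_mul, RCLike.norm_conj]
  exact mul_le_mul_of_nonneg_left (hle _ _) (norm_nonneg _)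

theorem integral_weylPairingIntegrand_eq {ε : ℝ} (hε : ε ≠ 0) (a : 𝓢(E × E, ℂ)) (φ : 𝓢(E, ℂ)) :
    ∫ z, weylPairingIntegrand ε a φ z ∂(μ.prod (μ.prod μ)) =
      ∫ q, wignerPairingIntegrand ε a φ q ∂((μ.prod μ).prod μ) := by
  have hmp := measurePreserving_wignerToWeylCoords μ hε
  rw [← hmp.map_eq, integral_map hmp.measurable.aemeasurable
    (continuous_weylPairingIntegrand ε a φ).aestronglyMeasurable]
  simp only [weylPairingIntegrand_wignerToWeylCoords hε]

theorem integrable_wignerPairingIntegrand {ε : ℝ} (hε : ε ≠ 0) (a : 𝓢(E × E, ℂ))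
    (φ : 𝓢(E, ℂ)) : Integrable (wignerPairingIntegrand ε a φ) ((μ.prod μ).prod μ) := by
  have h := (measurePreserving_wignerToWeylCoords μ hε).integrable_comp_of_integrable
    (integrable_weylPairingIntegrand μ hε a φ)
  rwa [Function.comp_def, funext (weylPairingIntegrand_wignerToWeylCoords hε a φ)] at h

end PhaseSpace

section Euclidean

variable {d : ℕ} {ε : ℝ}

theorem weylQuant_eq_integral_weylKernel (hε : ε ≠ 0)
    (a : 𝓢(EuclideanSpace ℝ (Fin d) × EuclideanSpace ℝ (Fin d), ℂ))
    (φ : 𝓢(EuclideanSpace ℝ (Fin d), ℂ)) (x : EuclideanSpace ℝ (Fin d)) :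
    weylQuant d ε a φ x = ((((2 * Real.pi) ^ d)⁻¹ : ℝ) : ℂ) * ∫ p, weylKernel ε a φ x p := by
  rw [Measure.volume_eq_prod, integral_prod _ (integrable_weylKernel volume hε a φ x)]
  rfl

theorem integral_conj_mul_weylQuant (hε : ε ≠ 0)
    (a : 𝓢(EuclideanSpace ℝ (Fin d) × EuclideanSpace ℝ (Fin d), ℂ))
    (φ : 𝓢(EuclideanSpace ℝ (Fin d), ℂ)) :
    ∫ x, starRingEnd ℂ (φ x) * weylQuant d ε a φ x =
      ((((2 * Real.pi) ^ d)⁻¹ : ℝ) : ℂ) * ∫ z, weylPairingIntegrand ε a φ z := by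
  simp_rw [weylQuant_eq_integral_weylKernel hε, mul_left_comm (starRingEnd ℂ _),
    ← integral_const_mul (starRingEnd ℂ _)]
  rw [integral_const_mul]
  exact congrArg _ (integral_integral (f := fun x p => weylPairingIntegrand ε a φ (x, p))
    (integrable_weylPairingIntegrand volume hε a φ))

theorem integral_mul_wigner (hε : ε ≠ 0)
    (a : 𝓢(EuclideanSpace ℝ (Fin d) × EuclideanSpace ℝ (Fin d), ℂ))
    (φ : 𝓢(EuclideanSpace ℝ (Fin d), ℂ)) :
    ∫ z, a z * wigner d ε φ φ z.1 z.2 =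
      ((((2 * Real.pi) ^ d)⁻¹ : ℝ) : ℂ) * ∫ q, wignerPairingIntegrand ε a φ q := by
  simp only [Measure.volume_eq_prod]
  rw [integral_prod _ (integrable_wignerPairingIntegrand volume hε a φ), ← integral_const_mul]
  congr 1 with z
  simp only [wigner, wignerPairingIntegrand, integral_const_mul]
  ring

end Euclidean

/-- The quantum expectation of a Weyl-quantized observable equals the phase-space
pairing of the symbol with the Wigner transform. -/
theorem weyl_expectation_eq_wigner_pairing (d : ℕ) (ε : ℝ) (hε : 0 < ε)
    (a : 𝓢(EuclideanSpace ℝ (Fin d) × EuclideanSpace ℝ (Fin d), ℂ))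
    (φ : 𝓢(EuclideanSpace ℝ (Fin d), ℂ)) :
    ∫ x : EuclideanSpace ℝ (Fin d),
        (starRingEnd ℂ) (φ x) * weylQuant d ε (⇑a) (⇑φ) x
      = ∫ z : EuclideanSpace ℝ (Fin d) × EuclideanSpace ℝ (Fin d),
          a z * wigner d ε (⇑φ) (⇑φ) z.1 z.2 := by
  rw [integral_conj_mul_weylQuant hε.ne', integral_mul_wigner hε.ne']
  exact congrArg _ (integral_weylPairingIntegrand_eq volume hε.ne' a φ)
end
end

section
/- (Fredholm identity for the linearized Schrödinger inverse problem.) Let ε > 0, T > 0, and let V_b, Ṽ : ℝ^d → ℝ be bounded and continuous. Let φ_b, φ̃, ψ : [0,T] × ℝ^d → ℂ have each time slice Schwartz in x with Schwartz seminorms bounded uniformly on [0,T], be differentiable in t as curves into L²(ℝ^d) with L²-derivative matching the respective equations, and satisfy classically: iε ∂_tφ_b = −(ε²/2)Δ_xφ_b + V_b φ_b; iε ∂_tφ̃ = −(ε²/2)Δ_xφ̃ + V_b φ̃ + Ṽ φ_b with φ̃(0,·) = 0; and iε ∂_tψ = −(ε²/2)Δ_xψ + V_b ψ. Then ∫_{ℝ^d}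 φ̃(T,x) conj(ψ(T,x)) dx = ∫_{ℝ^d} Ṽ(x) R_S(x) dx, where the Schrödinger representative is R_S(x) = (1/(iε)) ∫_0^T φ_b(t,x) conj(ψ(t,x)) dt. -/
/-!
Pair the linearized solution with the adjoint one, `F t = ⟪ψ t, φ̃ t⟫_{L²}`. The generator
`(iε/2) Δ - (i/ε) V_b` is skew-adjoint, since `Δ` is symmetric on Schwartz functions and
`V_b` is real, so in `F'(t)` only the source term survives:
`F'(t) = (1/(iε)) ∫ Ṽ φ_b conj ψ dx`. As `φ̃ 0 = 0`, integrating `F'` over `[0, T]` and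
exchanging the time and space integrals gives the identity.
-/

open MeasureTheory Complex
open scoped SchwartzMap

noncomputable section

/-- The spatial Laplacian `Δf(x) = ∑ⱼ ∂²f/∂xⱼ²` of a function on `ℝ^d`. -/
def lap (d : ℕ) (f : EuclideanSpace ℝ (Fin d) → ℂ) (x : EuclideanSpace ℝ (Fin d)) : ℂ :=
  ∑ j : Fin d, fderiv ℝ (fun y => fderiv ℝ f y (EuclideanSpace.single j (1 : ℝ))) x
    (EuclideanSpace.single j (1 : ℝ))

open Laplacian LineDeriv ComplexConjugate Set Function

theorem MeasureTheory.MemLp.inner_toLp {α 𝕜 : Type*} [RCLike 𝕜] [MeasurableSpace α]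
    {μ : Measure α} {f g : α → 𝕜} (hf : MemLp f 2 μ) (hg : MemLp g 2 μ) :
    inner 𝕜 hf.toLp hg.toLp = ∫ x, g x * conj (f x) ∂μ := by
  refine integral_congr_ae ?_
  filter_upwards [hf.coeFn_toLp, hg.coeFn_toLp] with x hfx hgx
  simp [hfx, hgx]

theorem MeasureTheory.MemLp.integrable_mul_conj {α 𝕜 : Type*} [RCLike 𝕜] [MeasurableSpace α]
    {μ : Measure α} {f g : α → 𝕜} (hf : MemLp f 2 μ) (hg : MemLp g 2 μ) :
    Integrable (fun x => g x * conj (f x)) μ :=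
  hf.star.integrable_mul hg |>.congr (.of_forall fun x => by simp [mul_comm])

theorem MeasureTheory.integrable_uncurry_restrict_Ioc_prod {X F : Type*}
    [TopologicalSpace X] [MeasurableSpace X] [OpensMeasurableSpace X]
    [NormedAddCommGroup F] [SecondCountableTopologyEither X F] {μ : Measure X} [SFinite μ]
    {a b : ℝ} (hab : a ≤ b) {f : ℝ → X → F} {g : X → ℝ} (hg : Integrable g μ)
    (hf_time : ∀ x, ContinuousOn (f · x) (Icc a b))
    (hf_space : ∀ t ∈ Icc a b, Continuous (f t))
    (hf_le : ∀ t ∈ Icc a b, ∀ x, ‖f t x‖ ≤ g x) :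
    Integrable (uncurry f) ((volume.restrict (Ioc a b)).prod μ) := by
  -- clamping time into `[a, b]` makes the kernel continuous in `t` on all of `ℝ`
  set f' : ℝ → X → F := fun t => f (projIcc a b hab t)
  have hmeas : StronglyMeasurable (uncurry f') :=
    stronglyMeasurable_uncurry_of_continuous_of_stronglyMeasurable
      (fun x => (hf_time x).comp_continuous continuous_projIcc.subtype_val fun t => Subtype.prop _)
      (fun t => (hf_space _ (Subtype.prop _)).stronglyMeasurable)
  have hIcc : ∀ᵐ p ∂(volume.restrict (Ioc a b)).prod μ, p.1 ∈ Icc a b :=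
    Measure.quasiMeasurePreserving_fst.ae
      ((ae_restrict_mem measurableSet_Ioc).mono fun t ht => Ioc_subset_Icc_self ht)
  have heq : uncurry f' =ᵐ[(volume.restrict (Ioc a b)).prod μ] uncurry f :=
    hIcc.mono fun p hp => by simp only [f', uncurry, projIcc_of_mem hab hp]
  refine (hg.comp_snd _).mono' (hmeas.aestronglyMeasurable.congr heq) ?_
  filter_upwards [hIcc] with p hp using hf_le p.1 hp p.2

namespace SchwartzMap

theorem lap_eq_laplacian {d : ℕ} (f : 𝓢(EuclideanSpace ℝ (Fin d), ℂ)) :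
    lap d f = ⇑(Δ f : 𝓢(EuclideanSpace ℝ (Fin d), ℂ)) := by
  ext x
  simp only [lap, laplacian_eq_sum (EuclideanSpace.basisFun (Fin d) ℝ), sum_apply,
    EuclideanSpace.basisFun_apply, lineDerivOp_apply_eq_fderiv]
  rfl

/-- The `ℝ`-bilinear pairing `(a, b) ↦ b * conj a` on `ℂ`. -/
def mulConjCLM : ℂ →L[ℝ] ℂ →L[ℝ] ℂ :=
  (ContinuousLinearMap.mul ℝ ℂ).flip.comp conjCLE.toContinuousLinearMap

theorem integrable_mul_conj {D : Type*} [NormedAddCommGroup D] [NormedSpace ℝ D]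
    [MeasurableSpace D] [BorelSpace D] [SecondCountableTopology D] {μ : Measure D}
    [μ.HasTemperateGrowth] (f g : 𝓢(D, ℂ)) : Integrable (fun x => g x * conj (f x)) μ :=
  (pairing mulConjCLM f g).integrable

theorem exists_integrable_bound_of_seminorm_le {D ι F : Type*} [NormedAddCommGroup D]
    [NormedSpace ℝ D] [MeasurableSpace D] {μ : Measure D} [μ.HasTemperateGrowth]
    [NormedAddCommGroup F] [NormedSpace ℝ F] {s : Set ι} {f : ι → 𝓢(D, F)}
    (hf : ∀ k, ∃ C, ∀ t ∈ s, SchwartzMap.seminorm ℝ k 0 (f t) ≤ C) :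
    ∃ g : D → ℝ, Integrable g μ ∧ ∀ t ∈ s, ∀ x, ‖f t x‖ ≤ g x := by
  obtain ⟨C₀, hC₀⟩ := hf 0
  obtain ⟨C, hC⟩ := hf μ.integrablePower
  refine ⟨fun x => 2 ^ μ.integrablePower * (C₀ + C) *
      (1 + ‖x‖) ^ (-(μ.integrablePower : ℝ)),
    μ.integrable_pow_neg_integrablePower.const_mul _, fun t ht x => ?_⟩
  simpa using pow_mul_le_of_le_of_pow_mul_le (k := 0) (norm_nonneg x) (norm_nonneg (f t x))
    ((norm_le_seminorm ℝ (f t) x).trans (hC₀ t ht))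
    (by simpa using (norm_pow_mul_le_seminorm ℝ (f t) _ x).trans (hC t ht))

theorem integral_laplacian_mul_conj {E : Type*} [NormedAddCommGroup E] [InnerProductSpace ℝ E]
    [FiniteDimensional ℝ E] [MeasurableSpace E] [BorelSpace E] {μ : Measure E}
    [μ.IsAddHaarMeasure] (f g : 𝓢(E, ℂ)) :
    ∫ x, Δ g x * conj (f x) ∂μ = ∫ x, g x * conj (Δ f x) ∂μ :=
  integral_bilinear_laplacian_right_eq_left f g mulConjCLM

end SchwartzMap

open SchwartzMap

theorem integral_linearized_mul_conj_add_eq_source {d : ℕ} (ε : ℝ)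
    (Vb Vs : EuclideanSpace ℝ (Fin d) → ℝ) (f g h : 𝓢(EuclideanSpace ℝ (Fin d), ℂ))
    (hg : MemLp (fun x => I * ε / 2 * lap d g x - I / ε * Vb x * g x - I / ε * Vs x * h x) 2)
    (hf : MemLp (fun x => I * ε / 2 * lap d f x - I / ε * Vb x * f x) 2) :
    (∫ x, (I * ε / 2 * lap d g x - I / ε * Vb x * g x - I / ε * Vs x * h x) * conj (f x))
      + ∫ x, g x * conj (I * ε / 2 * lap d f x - I / ε * Vb x * f x)
      = 1 / (I * ε) * ∫ x, Vs x * (h x * conj (f x)) := by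
  have hlhs := (f.memLp 2).integrable_mul_conj hg
  have hrhs := hf.integrable_mul_conj (g.memLp 2)
  rw [← integral_add hlhs hrhs]
  simp only [lap_eq_laplacian] at hlhs hrhs ⊢
  -- the potential `Vb` is real, so its terms cancel pointwise
  have hpoint : ∀ x,
      (I * ε / 2 * Δ g x - I / ε * Vb x * g x - I / ε * Vs x * h x) * conj (f x)
        + g x * conj (I * ε / 2 * Δ f x - I / ε * Vb x * f x)
      = I * ε / 2 * (Δ g x * conj (f x) - g x * conj (Δ f x))
        + 1 / (I * ε) * (Vs x * (h x * conj (f x))) := by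
    intro x
    simp only [map_sub, map_mul, map_div₀, conj_I, conj_ofReal, map_ofNat, one_div, mul_inv,
      inv_I]
    ring
  have hlap : Integrable (fun x => I * ε / 2 * (Δ g x * conj (f x) - g x * conj (Δ f x))) :=
    ((integrable_mul_conj f (Δ g)).sub (integrable_mul_conj (Δ f) g)).const_mul _
  have hsource : Integrable (fun x => 1 / (I * ε) * (Vs x * (h x * conj (f x)))) :=
    ((hlhs.add hrhs).sub hlap).congr (.of_forall fun x => by
      simp only [Pi.add_apply, Pi.sub_apply, hpoint]
      ring)
  rw [integral_congr_ae (.of_forall hpoint), integral_add hlap hsource, integral_const_mul,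
    integral_sub (integrable_mul_conj f (Δ g)) (integrable_mul_conj (Δ f) g),
    integral_laplacian_mul_conj, sub_self, mul_zero, zero_add, integral_const_mul]

theorem integrable_uncurry_potential_mul_conj {D : Type*} [NormedAddCommGroup D]
    [NormedSpace ℝ D] [MeasurableSpace D] [BorelSpace D] [SecondCountableTopology D]
    {μ : Measure D} [SFinite μ] [μ.HasTemperateGrowth] {a b : ℝ} (hab : a ≤ b)
    {V : D → ℝ} (hV_bdd : ∃ C, ∀ x, |V x| ≤ C) (hV : Continuous V)
    {f g : ℝ → 𝓢(D, ℂ)}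
    (hf : ∀ x, ContinuousOn (f · x) (Icc a b)) (hg : ∀ x, ContinuousOn (g · x) (Icc a b))
    (hf_bdd : ∀ k, ∃ C, ∀ t ∈ Icc a b, SchwartzMap.seminorm ℝ k 0 (f t) ≤ C)
    (hg_bdd : ∃ C, ∀ t ∈ Icc a b, SchwartzMap.seminorm ℝ 0 0 (g t) ≤ C) :
    Integrable (uncurry fun t x => (V x : ℂ) * (f t x * conj (g t x)))
      ((volume.restrict (Ioc a b)).prod μ) := by
  obtain ⟨CV, hCV⟩ := hV_bdd
  obtain ⟨Cg, hCg⟩ := hg_bdd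
  obtain ⟨B, hB, hfB⟩ := exists_integrable_bound_of_seminorm_le (μ := μ) hf_bdd
  refine integrable_uncurry_restrict_Ioc_prod hab (hB.const_mul (CV * Cg))
    (fun x => continuousOn_const.mul ((hf x).mul (continuous_conj.comp_continuousOn (hg x))))
    (fun t _ => by fun_prop) fun t ht x => ?_
  have hVx := hCV x
  have hfx := hfB t ht x
  have hgx : ‖g t x‖ ≤ Cg := (norm_le_seminorm ℝ (g t) x).trans (hCg t ht)
  have : 0 ≤ CV := (abs_nonneg _).trans hVx
  have : 0 ≤ B x := (norm_nonneg _).trans hfx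
  calc ‖(V x : ℂ) * (f t x * conj (g t x))‖ = |V x| * (‖f t x‖ * ‖g t x‖) := by
        simp
    _ ≤ CV * (B x * Cg) := by gcongr
    _ = CV * Cg * B x := by ring

theorem schrodinger_fredholm_identity_general (d : ℕ) (ε T : ℝ) (hT : 0 < T)
    (Vb Vt : EuclideanSpace ℝ (Fin d) → ℝ)
    (hVtb : ∃ C : ℝ, ∀ x, |Vt x| ≤ C) (hVtc : Continuous Vt)
    (φb φt ψ : ℝ → 𝓢(EuclideanSpace ℝ (Fin d), ℂ))
    -- `φ_b` solves the background Schrödinger equation classically: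
    (hφb : ∀ t ∈ Set.Icc (0 : ℝ) T, ∀ x : EuclideanSpace ℝ (Fin d),
      DifferentiableAt ℝ (fun s => φb s x) t ∧
      Complex.I * (ε : ℂ) * deriv (fun s => φb s x) t
        = -((ε ^ 2 / 2 : ℝ) : ℂ) * lap d (⇑(φb t)) x + ((Vb x : ℝ) : ℂ) * φb t x)
    (hφt0 : φt 0 = 0)
    -- `ψ` solves the adjoint (background) Schrödinger equation classically:
    (hψ : ∀ t ∈ Set.Icc (0 : ℝ) T, ∀ x : EuclideanSpace ℝ (Fin d),
      DifferentiableAt ℝ (fun s => ψ s x) t ∧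
      Complex.I * (ε : ℂ) * deriv (fun s => ψ s x) t
        = -((ε ^ 2 / 2 : ℝ) : ℂ) * lap d (⇑(ψ t)) x + ((Vb x : ℝ) : ℂ) * ψ t x)
    -- Schwartz seminorms of all time slices are bounded uniformly on `[0,T]`:
    (hφbB : ∀ n m : ℕ, ∃ C : ℝ, ∀ t ∈ Set.Icc (0 : ℝ) T,
      SchwartzMap.seminorm ℝ n m (φb t) ≤ C)
    (hψB : ∀ n m : ℕ, ∃ C : ℝ, ∀ t ∈ Set.Icc (0 : ℝ) T,
      SchwartzMap.seminorm ℝ n m (ψ t) ≤ C)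
    -- the three curves are differentiable in `t` as curves into `L²(ℝ^d)`,
    -- with `L²`-derivative matching the respective equations:
    (hφtM : ∀ t : ℝ, MemLp (⇑(φt t)) 2 (volume : Measure (EuclideanSpace ℝ (Fin d))))
    (hψM : ∀ t : ℝ, MemLp (⇑(ψ t)) 2 (volume : Measure (EuclideanSpace ℝ (Fin d))))
    (hφtD : ∀ t : ℝ, MemLp
      (fun x => (Complex.I * ε / 2) * lap d (⇑(φt t)) x - (Complex.I / ε) * Vb x * φt t x
        - (Complex.I / ε) * Vt x * φb t x)
      2 (volume : Measure (EuclideanSpace ℝ (Fin d))))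
    (hψD : ∀ t : ℝ, MemLp
      (fun x => (Complex.I * ε / 2) * lap d (⇑(ψ t)) x - (Complex.I / ε) * Vb x * ψ t x)
      2 (volume : Measure (EuclideanSpace ℝ (Fin d))))
    (hφtL2 : ∀ t ∈ Set.Icc (0 : ℝ) T,
      HasDerivAt (fun s => (hφtM s).toLp) ((hφtD t).toLp) t)
    (hψL2 : ∀ t ∈ Set.Icc (0 : ℝ) T,
      HasDerivAt (fun s => (hψM s).toLp) ((hψD t).toLp) t) :
    ∫ x : EuclideanSpace ℝ (Fin d), φt T x * (starRingEnd ℂ) (ψ T x)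
      = ∫ x : EuclideanSpace ℝ (Fin d), ((Vt x : ℝ) : ℂ) *
          ((1 / (Complex.I * ε)) * ∫ t in (0 : ℝ)..T, φb t x * (starRingEnd ℂ) (ψ t x)) := by
  set K := fun t x => (Vt x : ℂ) * (φb t x * conj (ψ t x))
  have hderiv : ∀ t ∈ uIcc 0 T, HasDerivAt (fun s => inner ℂ (hψM s).toLp (hφtM s).toLp)
      (1 / (I * ε) * ∫ x, K t x) t := by
    intro t ht
    rw [uIcc_of_le hT.le] at ht
    have h := (hψL2 t ht).inner ℂ (hφtL2 t ht)
    rwa [MemLp.inner_toLp, MemLp.inner_toLp,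
      integral_linearized_mul_conj_add_eq_source ε Vb Vt (ψ t) (φt t) (φb t) (hφtD t)
        (hψD t)] at h
  have hK : Integrable (uncurry K) ((volume.restrict (Ioc 0 T)).prod volume) :=
    integrable_uncurry_potential_mul_conj hT.le hVtb hVtc
      (fun x t ht => (hφb t ht x).1.continuousAt.continuousWithinAt)
      (fun x t ht => (hψ t ht x).1.continuousAt.continuousWithinAt)
      (fun k => hφbB k 0) (hψB 0 0)
  have hK_time : IntervalIntegrable (fun t => 1 / (I * ε) * ∫ x, K t x) volume 0 T :=
    ((intervalIntegrable_iff_integrableOn_Ioc_of_le hT.le).2 hK.integral_prod_left).const_mul _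
  calc ∫ x, φt T x * conj (ψ T x)
      = inner ℂ (hψM T).toLp (hφtM T).toLp - inner ℂ (hψM 0).toLp (hφtM 0).toLp := by
        simp [MemLp.inner_toLp, hφt0]
    _ = ∫ t in 0..T, 1 / (I * ε) * ∫ x, K t x :=
        (intervalIntegral.integral_eq_sub_of_hasDerivAt hderiv hK_time).symm
    _ = ∫ x, 1 / (I * ε) * ∫ t in 0..T, K t x := by
        rw [intervalIntegral.integral_const_mul, intervalIntegral_integral_swap
          (by rwa [uIoc_of_le hT.le]), integral_const_mul]
    _ = _ := integral_congr_ae (.of_forall fun x => by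
        simp only [K, intervalIntegral.integral_const_mul]
        ring)

/-- Fredholm identity for the linearized Schrödinger inverse problem:
`∫ φ̃(T) conj(ψ(T)) dx = ∫ Ṽ(x) R_S(x) dx` with the Schrödinger representative
`R_S(x) = (1/(iε)) ∫_0^T φ_b conj(ψ) dt`. -/
theorem schrodinger_fredholm_identity (d : ℕ) (ε T : ℝ) (hε : 0 < ε) (hT : 0 < T)
    (Vb Vt : EuclideanSpace ℝ (Fin d) → ℝ)
    (hVbb : ∃ C : ℝ, ∀ x, |Vb x| ≤ C) (hVbc : Continuous Vb)
    (hVtb : ∃ C : ℝ, ∀ x, |Vt x| ≤ C) (hVtc : Continuous Vt)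
    (φb φt ψ : ℝ → 𝓢(EuclideanSpace ℝ (Fin d), ℂ))
    -- `φ_b` solves the background Schrödinger equation classically:
    (hφb : ∀ t ∈ Set.Icc (0 : ℝ) T, ∀ x : EuclideanSpace ℝ (Fin d),
      DifferentiableAt ℝ (fun s => φb s x) t ∧
      Complex.I * (ε : ℂ) * deriv (fun s => φb s x) t
        = -((ε ^ 2 / 2 : ℝ) : ℂ) * lap d (⇑(φb t)) x + ((Vb x : ℝ) : ℂ) * φb t x)
    -- `φ̃` solves the linearized Schrödinger equation with source `Ṽ φ_b`:
    (hφt : ∀ t ∈ Set.Icc (0 : ℝ) T, ∀ x : EuclideanSpace ℝ (Fin d),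
      DifferentiableAt ℝ (fun s => φt s x) t ∧
      Complex.I * (ε : ℂ) * deriv (fun s => φt s x) t
        = -((ε ^ 2 / 2 : ℝ) : ℂ) * lap d (⇑(φt t)) x + ((Vb x : ℝ) : ℂ) * φt t x
          + ((Vt x : ℝ) : ℂ) * φb t x)
    (hφt0 : φt 0 = 0)
    -- `ψ` solves the adjoint (background) Schrödinger equation classically:
    (hψ : ∀ t ∈ Set.Icc (0 : ℝ) T, ∀ x : EuclideanSpace ℝ (Fin d),
      DifferentiableAt ℝ (fun s => ψ s x) t ∧
      Complex.I * (ε : ℂ) * deriv (fun s => ψ s x) t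
        = -((ε ^ 2 / 2 : ℝ) : ℂ) * lap d (⇑(ψ t)) x + ((Vb x : ℝ) : ℂ) * ψ t x)
    -- Schwartz seminorms of all time slices are bounded uniformly on `[0,T]`:
    (hφbB : ∀ n m : ℕ, ∃ C : ℝ, ∀ t ∈ Set.Icc (0 : ℝ) T,
      SchwartzMap.seminorm ℝ n m (φb t) ≤ C)
    (hφtB : ∀ n m : ℕ, ∃ C : ℝ, ∀ t ∈ Set.Icc (0 : ℝ) T,
      SchwartzMap.seminorm ℝ n m (φt t) ≤ C)
    (hψB : ∀ n m : ℕ, ∃ C : ℝ, ∀ t ∈ Set.Icc (0 : ℝ) T,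
      SchwartzMap.seminorm ℝ n m (ψ t) ≤ C)
    -- the three curves are differentiable in `t` as curves into `L²(ℝ^d)`,
    -- with `L²`-derivative matching the respective equations:
    (hφbM : ∀ t : ℝ, MemLp (⇑(φb t)) 2 (volume : Measure (EuclideanSpace ℝ (Fin d))))
    (hφtM : ∀ t : ℝ, MemLp (⇑(φt t)) 2 (volume : Measure (EuclideanSpace ℝ (Fin d))))
    (hψM : ∀ t : ℝ, MemLp (⇑(ψ t)) 2 (volume : Measure (EuclideanSpace ℝ (Fin d))))
    (hφbD : ∀ t : ℝ, MemLp
      (fun x => (Complex.I * ε / 2) * lap d (⇑(φb t)) x - (Complex.I / ε) * Vb x * φb t x)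
      2 (volume : Measure (EuclideanSpace ℝ (Fin d))))
    (hφtD : ∀ t : ℝ, MemLp
      (fun x => (Complex.I * ε / 2) * lap d (⇑(φt t)) x - (Complex.I / ε) * Vb x * φt t x
        - (Complex.I / ε) * Vt x * φb t x)
      2 (volume : Measure (EuclideanSpace ℝ (Fin d))))
    (hψD : ∀ t : ℝ, MemLp
      (fun x => (Complex.I * ε / 2) * lap d (⇑(ψ t)) x - (Complex.I / ε) * Vb x * ψ t x)
      2 (volume : Measure (EuclideanSpace ℝ (Fin d))))
    (hφbL2 : ∀ t ∈ Set.Icc (0 : ℝ) T,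
      HasDerivAt (fun s => (hφbM s).toLp) ((hφbD t).toLp) t)
    (hφtL2 : ∀ t ∈ Set.Icc (0 : ℝ) T,
      HasDerivAt (fun s => (hφtM s).toLp) ((hφtD t).toLp) t)
    (hψL2 : ∀ t ∈ Set.Icc (0 : ℝ) T,
      HasDerivAt (fun s => (hψM s).toLp) ((hψD t).toLp) t) :
    ∫ x : EuclideanSpace ℝ (Fin d), φt T x * (starRingEnd ℂ) (ψ T x)
      = ∫ x : EuclideanSpace ℝ (Fin d), ((Vt x : ℝ) : ℂ) *
          ((1 / (Complex.I * ε)) * ∫ t in (0 : ℝ)..T, φb t x * (starRingEnd ℂ) (ψ t x)) :=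
  schrodinger_fredholm_identity_general d ε T hT Vb Vt hVtb hVtc φb φt ψ hφb hφt0 hψ hφbB hψB hφtM
    hψM hφtD hψD hφtL2 hψL2
end
end
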